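/- Let n, k, r be integers with k, r ≥ 2 and n ≥ k + r, let H be a vertex-k-maximal r-uniform hypergraph on n vertices with separation triple (S, H_1, H_2), and define E_1 = {e ∈ E((H[S])^c) : κ̄(H_1 + e) = k} and E_2 = {e ∈ E((H[S])^c) : κ̄(H_2 + e) = k}. Then E_1 ∩ E_2 = ∅. -/

import Mathlib

/-- A finite hypergraph: a finite vertex set together with a finite set of
non-empty edges, each a subset of the vertex set. -/
structure FinHypergraph where
  verts : Finset ℕ
  edges : Finset (Finset ℕ)
  edge_sub : ∀ e ∈ edges, e ⊆ verts
  edge_nonempty : ∀ e ∈ edges, e.Nonempty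

namespace FinHypergraph

/-- `H` is `r`-uniform if every edge has cardinality `r`. -/
def IsUniform (H : FinHypergraph) (r : ℕ) : Prop := ∀ e ∈ H.edges, e.card = r

/-- `H'` is a subhypergraph of `H`. -/
def IsSub (H' H : FinHypergraph) : Prop := H'.verts ⊆ H.verts ∧ H'.edges ⊆ H.edges

/-- Two vertices are adjacent if some edge contains both. -/
def Adj (H : FinHypergraph) (u v : ℕ) : Prop := ∃ e ∈ H.edges, u ∈ e ∧ v ∈ e

/-- `H` is connected if every pair of vertices is joined by a path
(equivalently, a walk, i.e. is reachable via the adjacency relation). -/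
def Connected (H : FinHypergraph) : Prop :=
  ∀ u ∈ H.verts, ∀ v ∈ H.verts, Relation.ReflTransGen H.Adj u v

/-- The subhypergraph of `H` induced by the vertex set `Y`. -/
def induce (H : FinHypergraph) (Y : Finset ℕ) : FinHypergraph where
  verts := H.verts ∩ Y
  edges := H.edges.filter (fun e => e ⊆ Y)
  edge_sub := by
    intro e he
    simp only [Finset.mem_filter] at he
    exact Finset.subset_inter (H.edge_sub e he.1) he.2
  edge_nonempty := by
    intro e he
    simp only [Finset.mem_filter] at he
    exact H.edge_nonempty e he.1

/-- `X` is a vertex-cut of `H` if deleting `X` leaves a disconnected hypergraph. -/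
def IsVertexCut (H : FinHypergraph) (X : Finset ℕ) : Prop :=
  X ⊆ H.verts ∧ ¬ (H.induce (H.verts \ X)).Connected

open Classical in
/-- The vertex-connectivity of `H`: the minimum cardinality of a vertex-cut if one
exists, and `|V(H)| - 1` otherwise. -/
noncomputable def kappa (H : FinHypergraph) : ℕ :=
  if ∃ X, H.IsVertexCut X then sInf {m | ∃ X, H.IsVertexCut X ∧ X.card = m}
  else H.verts.card - 1

/-- `κ̄(H)`: the maximum vertex-connectivity over all subhypergraphs of `H`. -/
noncomputable def kappaBar (H : FinHypergraph) : ℕ :=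
  sSup {m | ∃ H' : FinHypergraph, H'.IsSub H ∧ H'.kappa = m}

/-- `H + e`: add the edge `e` (a non-empty subset of the vertices) to `H`. -/
def addEdge (H : FinHypergraph) (e : Finset ℕ) : FinHypergraph where
  verts := H.verts
  edges := if e ⊆ H.verts ∧ e.Nonempty then insert e H.edges else H.edges
  edge_sub := by
    intro f hf
    split at hf
    · rcases Finset.mem_insert.mp hf with rfl | hf
      · exact (by assumption : f ⊆ H.verts ∧ f.Nonempty).1
      · exact H.edge_sub f hf
    · exact H.edge_sub f hf
  edge_nonempty := by
    intro f hf
    split at hf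
    · rcases Finset.mem_insert.mp hf with rfl | hf
      · exact (by assumption : f ⊆ H.verts ∧ f.Nonempty).2
      · exact H.edge_nonempty f hf
    · exact H.edge_nonempty f hf

/-- `H + F`: add a set `F` of edges to `H`. -/
def addEdges (H : FinHypergraph) (F : Finset (Finset ℕ)) : FinHypergraph where
  verts := H.verts
  edges := H.edges ∪ F.filter (fun e => e ⊆ H.verts ∧ e.Nonempty)
  edge_sub := by
    intro f hf
    rcases Finset.mem_union.mp hf with hf | hf
    · exact H.edge_sub f hf
    · exact (Finset.mem_filter.mp hf).2.1
  edge_nonempty := by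
    intro f hf
    rcases Finset.mem_union.mp hf with hf | hf
    · exact H.edge_nonempty f hf
    · exact (Finset.mem_filter.mp hf).2.2

/-- `H` is vertex-`k`-maximal (as an `r`-uniform hypergraph): `κ̄(H) ≤ k`, but adding
any edge of the complement `H^c` creates a subhypergraph of connectivity at least `k + 1`. -/
def VertexKMaximal (H : FinHypergraph) (r k : ℕ) : Prop :=
  H.IsUniform r ∧ H.kappaBar ≤ k ∧
    ∀ e : Finset ℕ, e ⊆ H.verts → e.card = r → e ∉ H.edges →
      k + 1 ≤ (H.addEdge e).kappaBar

/-- The complete `r`-uniform hypergraph on the vertex set `V`. -/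
def completeHG (V : Finset ℕ) (r : ℕ) : FinHypergraph where
  verts := V
  edges := (V.powersetCard r).filter (fun e => e.Nonempty)
  edge_sub := by
    intro e he
    simp only [Finset.mem_filter, Finset.mem_powersetCard] at he
    exact he.1.1
  edge_nonempty := by
    intro e he
    exact (Finset.mem_filter.mp he).2

/-- The hypergraph on vertex set `V` with no edges. -/
def emptyHG (V : Finset ℕ) : FinHypergraph where
  verts := V
  edges := ∅
  edge_sub := by simp
  edge_nonempty := by simp

/-- The `r`-join `H₁ ∨_r H₂`: the union of `H₁` and `H₂` together with all
`r`-element subsets of `V(H₁) ∪ V(H₂)` meeting both `V(H₁)` and `V(H₂)`. -/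
def rJoin (H1 H2 : FinHypergraph) (r : ℕ) : FinHypergraph where
  verts := H1.verts ∪ H2.verts
  edges := H1.edges ∪ H2.edges ∪
    ((H1.verts ∪ H2.verts).powersetCard r).filter
      (fun e => (e ∩ H1.verts).Nonempty ∧ (e ∩ H2.verts).Nonempty)
  edge_sub := by
    intro e he
    rcases Finset.mem_union.mp he with he | he
    · rcases Finset.mem_union.mp he with he | he
      · exact (H1.edge_sub e he).trans Finset.subset_union_left
      · exact (H2.edge_sub e he).trans Finset.subset_union_right
    · exact (Finset.mem_powersetCard.mp (Finset.mem_filter.mp he).1).1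
  edge_nonempty := by
    intro e he
    rcases Finset.mem_union.mp he with he | he
    · rcases Finset.mem_union.mp he with he | he
      · exact H1.edge_nonempty e he
      · exact H2.edge_nonempty e he
    · obtain ⟨x, hx⟩ := (Finset.mem_filter.mp he).2.1
      exact ⟨x, (Finset.mem_inter.mp hx).1⟩

/-- The union of two hypergraphs. -/
def hUnion (H1 H2 : FinHypergraph) : FinHypergraph where
  verts := H1.verts ∪ H2.verts
  edges := H1.edges ∪ H2.edges
  edge_sub := by
    intro e he
    rcases Finset.mem_union.mp he with he | he
    · exact (H1.edge_sub e he).trans Finset.subset_union_left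
    · exact (H2.edge_sub e he).trans Finset.subset_union_right
  edge_nonempty := by
    intro e he
    rcases Finset.mem_union.mp he with he | he
    · exact H1.edge_nonempty e he
    · exact H2.edge_nonempty e he

/-- The union of the hypergraphs `f 0, …, f (m-1)`. -/
def unionOver (m : ℕ) (f : ℕ → FinHypergraph) : FinHypergraph where
  verts := (Finset.range m).biUnion (fun i => (f i).verts)
  edges := (Finset.range m).biUnion (fun i => (f i).edges)
  edge_sub := by
    intro e he
    obtain ⟨i, hi, hei⟩ := Finset.mem_biUnion.mp he
    exact ((f i).edge_sub e hei).trans (Finset.subset_biUnion_of_mem (fun i => (f i).verts) hi)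
  edge_nonempty := by
    intro e he
    obtain ⟨i, _, hei⟩ := Finset.mem_biUnion.mp he
    exact (f i).edge_nonempty e hei

/-- `C` is a component of `G`: a maximal connected subhypergraph. -/
def IsComponent (G C : FinHypergraph) : Prop :=
  C.IsSub G ∧ C.Connected ∧
    ∀ C' : FinHypergraph, C'.IsSub G → C'.Connected → C.IsSub C' → C' = C

/-- `(S, H₁, H₂)` is a separation triple of `H`: `S` is a minimum vertex-cut,
`H₁ = H[S ∪ V(C₁)]` and `H₂ = H[S ∪ V(C₂)]`, where `C₁` is a component of `H - S`
and `C₂ = H - (S ∪ V(C₁))`. -/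
def IsSeparationTriple (H : FinHypergraph) (S : Finset ℕ) (H1 H2 : FinHypergraph) : Prop :=
  H.IsVertexCut S ∧ (∀ X : Finset ℕ, H.IsVertexCut X → S.card ≤ X.card) ∧
    ∃ C1 : FinHypergraph, IsComponent (H.induce (H.verts \ S)) C1 ∧
      H1 = H.induce (S ∪ C1.verts) ∧
      H2 = H.induce (S ∪ (H.verts \ (S ∪ C1.verts)))

/-!
Let `e ⊆ S` be a non-edge lying in both sets. By maximality, `H + e` has a subhypergraph `K`
with `κ(K) ≥ k + 1`. If `V(K)` stays on one side of `S`, then `K` is a subhypergraph of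
`H₁ + e` or of `H₂ + e`, whose `κ̄` is `k`. Otherwise `K` meets both `C₁` and `C₂`; since the
only edge of `K` outside `H` lies in `S`, the set `S ∩ V(K)` separates `K`, so
`κ(K) ≤ |S| = κ(H) ≤ k`.
-/

open Relation

lemma adj_mono {G G' : FinHypergraph} (h : G.edges ⊆ G'.edges) {u v : ℕ} (ha : G.Adj u v) :
    G'.Adj u v :=
  let ⟨f, hf, hu, hv⟩ := ha
  ⟨f, h hf, hu, hv⟩

instance (G : FinHypergraph) : Std.Symm G.Adj :=
  ⟨fun _ _ ⟨f, hf, hu, hv⟩ => ⟨f, hf, hv, hu⟩⟩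

lemma IsSub.refl (G : FinHypergraph) : G.IsSub G := ⟨subset_rfl, subset_rfl⟩

section Connectivity

variable {G K : FinHypergraph}

lemma kappa_le_card_of_isVertexCut {X : Finset ℕ} (hX : G.IsVertexCut X) :
    G.kappa ≤ X.card := by
  rw [kappa, if_pos ⟨X, hX⟩]
  exact Nat.sInf_le ⟨X, hX, rfl⟩

lemma kappa_eq_card_of_isVertexCut_of_forall_card_le {S : Finset ℕ} (hS : G.IsVertexCut S)
    (hmin : ∀ X, G.IsVertexCut X → S.card ≤ X.card) : G.kappa = S.card := by
  refine le_antisymm (kappa_le_card_of_isVertexCut hS) ?_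
  rw [kappa, if_pos ⟨S, hS⟩]
  obtain ⟨X, hX, hXcard⟩ :=
    Nat.sInf_mem (s := {m | ∃ X, G.IsVertexCut X ∧ X.card = m}) ⟨S.card, S, hS, rfl⟩
  exact hXcard ▸ hmin X hX

lemma kappa_le_card (G : FinHypergraph) : G.kappa ≤ G.verts.card := by
  by_cases h : ∃ X, G.IsVertexCut X
  · obtain ⟨X, hX⟩ := h
    exact (kappa_le_card_of_isVertexCut hX).trans (Finset.card_le_card hX.1)
  · rw [kappa, if_neg h]
    exact Nat.sub_le _ _

lemma bddAbove_kappa_of_isSub (G : FinHypergraph) :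
    BddAbove {m | ∃ H' : FinHypergraph, H'.IsSub G ∧ H'.kappa = m} := by
  refine ⟨G.verts.card, ?_⟩
  rintro m ⟨H', hsub, rfl⟩
  exact H'.kappa_le_card.trans (Finset.card_le_card hsub.1)

lemma IsSub.kappa_le_kappaBar (h : K.IsSub G) : K.kappa ≤ G.kappaBar :=
  le_csSup G.bddAbove_kappa_of_isSub ⟨K, h, rfl⟩

lemma exists_isSub_kappa_eq_kappaBar (G : FinHypergraph) :
    ∃ K : FinHypergraph, K.IsSub G ∧ K.kappa = G.kappaBar :=
  Nat.sSup_mem (s := {m | ∃ H' : FinHypergraph, H'.IsSub G ∧ H'.kappa = m})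
    ⟨G.kappa, G, IsSub.refl G, rfl⟩ G.bddAbove_kappa_of_isSub

end Connectivity

section AddEdge

variable {H K : FinHypergraph} {e : Finset ℕ}

lemma edges_addEdge_subset (H : FinHypergraph) (e : Finset ℕ) :
    (H.addEdge e).edges ⊆ insert e H.edges := by
  unfold addEdge
  split_ifs
  exacts [subset_rfl, Finset.subset_insert _ _]

lemma edges_subset_edges_addEdge (H : FinHypergraph) (e : Finset ℕ) :
    H.edges ⊆ (H.addEdge e).edges := by
  unfold addEdge
  split_ifs
  exacts [Finset.subset_insert _ _, subset_rfl]

lemma mem_edges_addEdge (he : e ⊆ H.verts) (hne : e.Nonempty) : e ∈ (H.addEdge e).edges := by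
  simp [addEdge, he, hne]

lemma IsSub.addEdge_induce {T : Finset ℕ} (hK : K.IsSub (H.addEdge e)) (hT : K.verts ⊆ T) :
    K.IsSub ((H.induce T).addEdge e) := by
  refine ⟨Finset.subset_inter hK.1 hT, fun f hf => ?_⟩
  have hfT : f ⊆ T := (K.edge_sub f hf).trans hT
  rcases Finset.mem_insert.mp (edges_addEdge_subset H e (hK.2 hf)) with rfl | hfH
  · exact mem_edges_addEdge (Finset.subset_inter ((K.edge_sub f hf).trans hK.1) hfT)
      (K.edge_nonempty f hf)
  · exact edges_subset_edges_addEdge _ _ (Finset.mem_filter.mpr ⟨hfH, hfT⟩)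

end AddEdge

section Component

variable {G C : FinHypergraph}

lemma IsComponent.subset_of_mem_edges (hC : IsComponent G C) {f : Finset ℕ} (hf : f ∈ G.edges)
    {w : ℕ} (hw : w ∈ f) (hwC : w ∈ C.verts) : f ⊆ C.verts := by
  set C' := C.hUnion (G.induce f)
  have hreach : ∀ x ∈ C'.verts, ReflTransGen C'.Adj x w := by
    intro x hx
    rcases Finset.mem_union.mp hx with hx | hx
    · exact ReflTransGen.mono (fun _ _ => adj_mono Finset.subset_union_left) _ _
        (hC.2.1 x hx w hwC)
    · exact .single ⟨f, Finset.mem_union_right _ (Finset.mem_filter.mpr ⟨hf, subset_rfl⟩),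
        (Finset.mem_inter.mp hx).2, hw⟩
  have hconn : C'.Connected := fun u hu v hv =>
    (hreach u hu).trans (Std.Symm.symm _ _ (hreach v hv))
  have hsub : C'.IsSub G :=
    ⟨Finset.union_subset hC.1.1 Finset.inter_subset_left,
      Finset.union_subset hC.1.2 (Finset.filter_subset _ _)⟩
  have hC' : C' = C := hC.2.2 C' hsub hconn ⟨Finset.subset_union_left, Finset.subset_union_left⟩
  intro z hz
  rw [← hC']
  exact Finset.mem_union_right _ (Finset.mem_inter.mpr ⟨G.edge_sub f hf hz, hz⟩)

lemma IsComponent.mem_of_reflTransGen (hC : IsComponent G C) {a x : ℕ} (ha : a ∈ C.verts)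
    (h : ReflTransGen G.Adj a x) : x ∈ C.verts := by
  induction h with
  | refl => exact ha
  | tail _ hadj ih =>
    obtain ⟨f, hf, hyf, hxf⟩ := hadj
    exact hC.subset_of_mem_edges hf hyf ih hxf

end Component

lemma isVertexCut_inter_of_mem_component {H K C : FinHypergraph} {S : Finset ℕ}
    (hK : ∀ f ∈ K.edges, f ∈ H.edges ∨ f ⊆ S)
    (hC : IsComponent (H.induce (H.verts \ S)) C)
    {a b : ℕ} (ha : a ∈ K.verts) (haC : a ∈ C.verts) (hb : b ∈ K.verts) (hbS : b ∉ S)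
    (hbC : b ∉ C.verts) : K.IsVertexCut (S ∩ K.verts) := by
  have hedges :
      (K.induce (K.verts \ (S ∩ K.verts))).edges ⊆ (H.induce (H.verts \ S)).edges := by
    intro f hf
    obtain ⟨hfK, hfsub⟩ := Finset.mem_filter.mp hf
    have hdisj : Disjoint f S := Finset.disjoint_left.mpr fun z hz hzS =>
      (Finset.mem_sdiff.mp (hfsub hz)).2 (Finset.mem_inter.mpr ⟨hzS, K.edge_sub f hfK hz⟩)
    obtain ⟨z, hz⟩ := K.edge_nonempty f hfK
    have hfH : f ∈ H.edges :=
      (hK f hfK).resolve_right fun hfS => Finset.disjoint_left.mp hdisj hz (hfS hz)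
    exact Finset.mem_filter.mpr
      ⟨hfH, fun z hz =>
        Finset.mem_sdiff.mpr ⟨H.edge_sub f hfH hz, Finset.disjoint_left.mp hdisj hz⟩⟩
  have haS : a ∉ S := (Finset.mem_sdiff.mp (Finset.mem_inter.mp (hC.1.1 haC)).2).2
  refine ⟨Finset.inter_subset_right, fun hconn => hbC ?_⟩
  refine hC.mem_of_reflTransGen haC
    (ReflTransGen.mono (fun _ _ => adj_mono hedges) _ _ (hconn a ?_ b ?_))
  · simp [induce, ha, haS]
  · simp [induce, hb, hbS]

end FinHypergraph

theorem stmt_14_general (k r : ℕ)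
    (H : FinHypergraph) (hH : H.VertexKMaximal r k)
    (S : Finset ℕ) (H1 H2 : FinHypergraph) (hsep : H.IsSeparationTriple S H1 H2) :
    {e : Finset ℕ | (e ⊆ S ∧ e.card = r ∧ e ∉ (H.induce S).edges) ∧
        (H1.addEdge e).kappaBar = k} ∩
      {e : Finset ℕ | (e ⊆ S ∧ e.card = r ∧ e ∉ (H.induce S).edges) ∧
        (H2.addEdge e).kappaBar = k} = ∅ := by
  rw [Set.eq_empty_iff_forall_notMem]
  rintro e ⟨⟨⟨heS, her, heHS⟩, hk1⟩, -, hk2⟩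
  obtain ⟨hScut, hSmin, C1, hC1, rfl, rfl⟩ := hsep
  have heH : e ∉ H.edges := fun h => heHS (Finset.mem_filter.mpr ⟨h, heS⟩)
  obtain ⟨K, hKsub, hKk⟩ := (H.addEdge e).exists_isSub_kappa_eq_kappaBar
  have hK : k + 1 ≤ K.kappa := hKk ▸ hH.2.2 e (heS.trans hScut.1) her heH
  have hside : ∀ T, K.verts ⊆ T → K.kappa ≤ ((H.induce T).addEdge e).kappaBar :=
    fun _ hT => (hKsub.addEdge_induce hT).kappa_le_kappaBar
  by_cases h1 : K.verts ⊆ S ∪ C1.verts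
  · have := hside _ h1; omega
  by_cases h2 : K.verts ⊆ S ∪ (H.verts \ (S ∪ C1.verts))
  · have := hside _ h2; omega
  obtain ⟨b, hbK, hb⟩ := Finset.not_subset.mp h1
  obtain ⟨a, haK, ha⟩ := Finset.not_subset.mp h2
  have haC : a ∈ C1.verts := by
    have : a ∈ H.verts := hKsub.1 haK
    simp_all
  have hKedges : ∀ f ∈ K.edges, f ∈ H.edges ∨ f ⊆ S := fun f hf =>
    (Finset.mem_insert.mp (FinHypergraph.edges_addEdge_subset H e (hKsub.2 hf))).elim
      (fun h => .inr (h ▸ heS)) .inl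
  have hcut := FinHypergraph.isVertexCut_inter_of_mem_component hKedges hC1 haK haC hbK
    (fun h => hb (Finset.mem_union_left _ h)) (fun h => hb (Finset.mem_union_right _ h))
  have hSk : S.card ≤ k :=
    FinHypergraph.kappa_eq_card_of_isVertexCut_of_forall_card_le hScut hSmin ▸
    (FinHypergraph.IsSub.refl H).kappa_le_kappaBar.trans hH.2.1
  have := FinHypergraph.kappa_le_card_of_isVertexCut hcut
  have := Finset.card_le_card (Finset.inter_subset_left : S ∩ K.verts ⊆ S)
  omega

/-- With a separation triple `(S, H₁, H₂)` of a vertex-`k`-maximal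
`r`-uniform hypergraph `H`, the sets `E₁ = {e ∈ E((H[S])^c) : κ̄(H₁ + e) = k}` and
`E₂ = {e ∈ E((H[S])^c) : κ̄(H₂ + e) = k}` are disjoint. -/
theorem stmt_14 (n k r : ℕ) (hk : 2 ≤ k) (hr : 2 ≤ r) (hn : k + r ≤ n)
    (H : FinHypergraph) (hcard : H.verts.card = n) (hH : H.VertexKMaximal r k)
    (S : Finset ℕ) (H1 H2 : FinHypergraph) (hsep : H.IsSeparationTriple S H1 H2) :
    {e : Finset ℕ | (e ⊆ S ∧ e.card = r ∧ e ∉ (H.induce S).edges) ∧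
        (H1.addEdge e).kappaBar = k} ∩
      {e : Finset ℕ | (e ⊆ S ∧ e.card = r ∧ e ∉ (H.induce S).edges) ∧
        (H2.addEdge e).kappaBar = k} = ∅ :=
  stmt_14_general k r H hH S H1 H2 hsep
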